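/- arXiv:2306.01099 — 2 statements merged into one kernel-verified Lean document; each statement's English description precedes it below -/
import Mathlib

section
/- Let S : ℝ → ℝ be odd, continuous and bounded, and let (x_1,…,x_N,m_1,…,m_N) be a classical solution on [0,T̄] of the weighted Coulomb opinion dynamics system with x_1(0) < … < x_N(0), m_i(0) > 0 for all i and (1/N)·∑_{i=1}^N m_i(0) = 1. Then there exist times 0 = T_0 < T_1 < … < T_{k−1} < T_k = T̄ with 1 ≤ k ≤ N such that for every 1 ≤ l ≤ k and every pair of indices 1 ≤ i, j ≤ N, either x_i(t) = x_j(t) for all t ∈ [T_{l−1},T_l) or x_i(t) ≠ x_j(t) for all t ∈ [T_{l−1},T_l). Moreover the initial ordering is preserved: x_1(t) ≤ x_2(t) ≤ … ≤ x_N(t) for all t ∈ [0,T̄]. -/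
open MeasureTheory Filter

noncomputable section

/-- A classical solution (in integral form) of the weighted 1D Coulomb opinion
dynamics with interaction kernel `S`, `N` agents, on the time interval `[0, T]`.
Agents are indexed by `1, …, N`. -/
def IsCoulombSol (S : ℝ → ℝ) (N : ℕ) (T : ℝ) (x m : ℕ → ℝ → ℝ) : Prop :=
  ∀ i ∈ Finset.Icc 1 N,
    ContinuousOn (x i) (Set.Icc 0 T) ∧ ContinuousOn (m i) (Set.Icc 0 T) ∧
    (∀ t ∈ Set.Icc (0 : ℝ) T,
      x i t = x i 0 + ∫ τ in (0 : ℝ)..t,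
        (1 / (N : ℝ)) * ∑ j ∈ (Finset.Icc 1 N).erase i,
          m j τ * Real.sign (x j τ - x i τ)) ∧
    (∀ t ∈ Set.Icc (0 : ℝ) T,
      m i t = m i 0 + ∫ τ in (0 : ℝ)..t,
        (1 / (N : ℝ)) * ∑ j ∈ Finset.Icc 1 N,
          m i τ * m j τ * S (x j τ - x i τ))

/-- The shifted empirical distribution function
`F_N(t,y) = -1/2 + (1/N) ∑ m_k(t) H(y - x_k(t))`, `H` the Heaviside function. -/
def FNemp (N : ℕ) (x m : ℕ → ℝ → ℝ) (t y : ℝ) : ℝ :=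
  -(1 / 2) + (1 / (N : ℝ)) * ∑ k ∈ Finset.Icc 1 N,
    m k t * (if 0 ≤ y - x k t then (1 : ℝ) else 0)

/-- The nonlocal source operator
`𝐒[F](t,y) = F(t,y)(φ⋆F)(t,y) − ∫_{−∞}^y F(t,z)(φ'⋆F)(t,z) dz`. -/
def Ssrc (φ : ℝ → ℝ) (F : ℝ → ℝ → ℝ) (t y : ℝ) : ℝ :=
  F t y * (∫ z, φ (y - z) * F t z) -
    ∫ z in Set.Iio y, F t z * (∫ ζ, deriv φ (z - ζ) * F t ζ)

/-- The Kruzkov-type entropy inequality, for entropy level `α`, associated to the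
equation `∂ₜF + ∂ₓ(A(t,F)) = 𝐒[F]` on `(0,T) × ℝ`, with `φ = S'`. -/
def EntropyIneq (T : ℝ) (A : ℝ → ℝ → ℝ) (φ : ℝ → ℝ) (F : ℝ → ℝ → ℝ) (α : ℝ) : Prop :=
  ∀ χ : ℝ → ℝ → ℝ,
    ContDiff ℝ (⊤ : ℕ∞) (fun p : ℝ × ℝ => χ p.1 p.2) →
    HasCompactSupport (fun p : ℝ × ℝ => χ p.1 p.2) →
    (∀ t y, χ t y ≠ 0 → t ∈ Set.Ioo 0 T) →
    (∀ t y, 0 ≤ χ t y) →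
    0 ≤ ∫ t in Set.Ioo 0 T, ∫ y : ℝ,
        (|F t y - α| * deriv (fun s => χ s y) t
          + Real.sign (F t y - α) * (A t (F t y) - A t α) * deriv (fun z => χ t z) y
          + Real.sign (F t y - α) * χ t y * Ssrc φ F t y)

/-- Entropy solution of `∂ₜF + ∂ₓ(A(t,F)) = 𝐒[F]` with initial datum `F0`. -/
def IsEntropySol (T R : ℝ) (A : ℝ → ℝ → ℝ) (φ : ℝ → ℝ)
    (F : ℝ → ℝ → ℝ) (F0 : ℝ → ℝ) : Prop :=
  Measurable (fun p : ℝ × ℝ => F p.1 p.2) ∧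
  (∀ t y, F t y ∈ Set.Icc (-(1 / 2) : ℝ) (1 / 2)) ∧
  (∀ t ∈ Set.Icc (0 : ℝ) T, ∀ y, R ≤ y → F t y = 1 / 2 ∧ F t (-y) = -(1 / 2)) ∧
  (∀ t ∈ Set.Icc (0 : ℝ) T, Monotone (F t)) ∧
  (∀ g : ℝ → ℝ, ContDiff ℝ (⊤ : ℕ∞) g → HasCompactSupport g →
    Tendsto (fun t => ∫ y, F t y * g y) (nhdsWithin 0 (Set.Ioi 0))
      (nhds (∫ y, F0 y * g y))) ∧
  (∀ α : ℝ, EntropyIneq T A φ F α)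

end

lemma realSign_mono : Monotone Real.sign := by
  intro a b hab
  rcases lt_trichotomy a 0 with ha|ha|ha <;> rcases lt_trichotomy b 0 with hb|hb|hb <;>
    simp_all [Real.sign_of_neg, Real.sign_of_pos, Real.sign_zero] <;> linarith

lemma realSign_abs_le (y : ℝ) : |Real.sign y| ≤ 1 := by
  rcases Real.sign_apply_eq y with h|h|h <;> rw [h] <;> norm_num

lemma realSign_nonpos {y : ℝ} (h : y ≤ 0) : Real.sign y ≤ 0 := by
  rcases eq_or_lt_of_le h with h'|h'
  · simp [h', Real.sign_zero]
  · simp [Real.sign_of_neg h']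

lemma realSign_nonneg {y : ℝ} (h : 0 ≤ y) : 0 ≤ Real.sign y := by
  rcases eq_or_lt_of_le h with h'|h'
  · simp [← h', Real.sign_zero]
  · simp [Real.sign_of_pos h']

lemma measurable_realSign : Measurable Real.sign := by
  have : Real.sign = fun r : ℝ => if r < 0 then (-1:ℝ) else if 0 < r then 1 else 0 := by
    funext r; rfl
  rw [this]
  exact Measurable.ite measurableSet_Iio measurable_const
    (Measurable.ite measurableSet_Ioi measurable_const measurable_const)

noncomputable section
namespace CoulombAux

variable {S : ℝ → ℝ} {N : ℕ} {T : ℝ} {x m : ℕ → ℝ → ℝ}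

/-- the velocity field of agent `i` -/
def fx (N : ℕ) (x m : ℕ → ℝ → ℝ) (i : ℕ) (τ : ℝ) : ℝ :=
  (1 / (N : ℝ)) * ∑ j ∈ (Finset.Icc 1 N).erase i, m j τ * Real.sign (x j τ - x i τ)

/-- the mass growth field of agent `i` -/
def gm (S : ℝ → ℝ) (N : ℕ) (x m : ℕ → ℝ → ℝ) (i : ℕ) (τ : ℝ) : ℝ :=
  (1 / (N : ℝ)) * ∑ j ∈ Finset.Icc 1 N, m i τ * m j τ * S (x j τ - x i τ)

lemma exists_mass_bound (hsol : IsCoulombSol S N T x m) :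
    ∃ B, 0 ≤ B ∧ ∀ j ∈ Finset.Icc 1 N, ∀ τ ∈ Set.Icc (0:ℝ) T, |m j τ| ≤ B := by
  have hcont : ContinuousOn (fun τ => ∑ j ∈ Finset.Icc 1 N, |m j τ|) (Set.Icc 0 T) :=
    continuousOn_finset_sum _ (fun j hj => ((hsol j hj).2.1).abs)
  obtain ⟨B, hB⟩ := (isCompact_Icc (a := (0:ℝ)) (b := T)).exists_bound_of_continuousOn hcont
  refine ⟨max B 0, le_max_right _ _, fun j hj τ hτ => ?_⟩
  have h1 : |m j τ| ≤ ∑ k ∈ Finset.Icc 1 N, |m k τ| :=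
    Finset.single_le_sum (f := fun k => |m k τ|) (fun k _ => abs_nonneg _) hj
  have h2 := hB τ hτ
  rw [Real.norm_eq_abs] at h2
  have h3 := (le_abs_self (∑ k ∈ Finset.Icc 1 N, |m k τ|)).trans h2
  calc |m j τ| ≤ (∑ k ∈ Finset.Icc 1 N, |m k τ|) := h1
    _ ≤ B := h3
    _ ≤ max B 0 := le_max_left _ _

lemma fx_bound (hsol : IsCoulombSol S N T x m) {B : ℝ} (hB0 : 0 ≤ B)
    (hB : ∀ j ∈ Finset.Icc 1 N, ∀ τ ∈ Set.Icc (0:ℝ) T, |m j τ| ≤ B)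
    {i : ℕ} {τ : ℝ} (hτ : τ ∈ Set.Icc (0:ℝ) T) : |fx N x m i τ| ≤ B := by
  rcases Nat.eq_zero_or_pos N with hN | hN
  · simp [fx, hN, hB0]
  have hNpos : (0:ℝ) < N := by exact_mod_cast hN
  have h1 : |∑ j ∈ (Finset.Icc 1 N).erase i, m j τ * Real.sign (x j τ - x i τ)|
      ≤ ∑ j ∈ (Finset.Icc 1 N).erase i, B := by
    refine (Finset.abs_sum_le_sum_abs _ _).trans (Finset.sum_le_sum fun j hj => ?_)
    have hj' : j ∈ Finset.Icc 1 N := Finset.mem_of_mem_erase hj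
    calc |m j τ * Real.sign (x j τ - x i τ)| = |m j τ| * |Real.sign (x j τ - x i τ)| :=
          abs_mul _ _
      _ ≤ B * 1 := mul_le_mul (hB j hj' τ hτ) (realSign_abs_le _) (abs_nonneg _) hB0
      _ = B := mul_one B
  have hcard : ((Finset.Icc 1 N).erase i).card ≤ N := by
    calc ((Finset.Icc 1 N).erase i).card ≤ (Finset.Icc 1 N).card := Finset.card_erase_le
      _ = N := by simp
  have h2 : ∑ j ∈ (Finset.Icc 1 N).erase i, B ≤ N * B := by
    rw [Finset.sum_const, nsmul_eq_mul]
    exact mul_le_mul_of_nonneg_right (by exact_mod_cast hcard) hB0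
  have : |fx N x m i τ| ≤ (1 / (N:ℝ)) * (N * B) := by
    rw [fx, abs_mul, abs_of_nonneg (by positivity : (0:ℝ) ≤ 1 / (N:ℝ))]
    exact mul_le_mul_of_nonneg_left (h1.trans h2) (by positivity)
  calc |fx N x m i τ| ≤ (1 / (N:ℝ)) * (N * B) := this
    _ = B := by field_simp

lemma fx_integrable (hsol : IsCoulombSol S N T x m)
    {i : ℕ} (hi : i ∈ Finset.Icc 1 N) {s t : ℝ}
    (hs : s ∈ Set.Icc (0:ℝ) T) (ht : t ∈ Set.Icc (0:ℝ) T) :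
    IntervalIntegrable (fx N x m i) volume s t := by
  obtain ⟨B, hB0, hB⟩ := exists_mass_bound hsol
  have hsub : Set.uIoc s t ⊆ Set.Icc (0:ℝ) T :=
    Set.uIoc_subset_uIcc.trans (Set.uIcc_subset_Icc hs ht)
  rw [intervalIntegrable_iff]
  have hmeas : AEStronglyMeasurable (fx N x m i) (volume.restrict (Set.Icc (0:ℝ) T)) := by
    apply AEMeasurable.aestronglyMeasurable
    rw [show fx N x m i = fun τ => (1/(N:ℝ)) * ∑ j ∈ (Finset.Icc 1 N).erase i,
      m j τ * Real.sign (x j τ - x i τ) from rfl]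
    apply AEMeasurable.const_mul
    apply Finset.aemeasurable_fun_sum
    intro j hj
    have hj' := Finset.mem_of_mem_erase hj
    have hmj : AEMeasurable (m j) (volume.restrict (Set.Icc (0:ℝ) T)) :=
      ((hsol j hj').2.1).aemeasurable measurableSet_Icc
    have hx : AEMeasurable (fun τ => x j τ - x i τ) (volume.restrict (Set.Icc (0:ℝ) T)) :=
      (((hsol j hj').1).sub ((hsol i hi).1)).aemeasurable measurableSet_Icc
    exact hmj.mul (measurable_realSign.comp_aemeasurable hx)
  obtain ⟨B, hB0, hB⟩ := exists_mass_bound hsol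
  have hint : IntegrableOn (fx N x m i) (Set.Icc 0 T) := by
    refine Integrable.mono' (integrable_const B) hmeas ?_
    filter_upwards [ae_restrict_mem measurableSet_Icc] with τ hτ
    rw [Real.norm_eq_abs]; exact fx_bound hsol hB0 hB hτ
  exact hint.mono_set hsub

/-- increment identity -/
lemma x_increment (hsol : IsCoulombSol S N T x m)
    {i : ℕ} (hi : i ∈ Finset.Icc 1 N) {s t : ℝ}
    (hs : s ∈ Set.Icc (0:ℝ) T) (ht : t ∈ Set.Icc (0:ℝ) T) :
    x i t = x i s + ∫ τ in s..t, fx N x m i τ := by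
  obtain ⟨hxc, hmc, hxeq, hmeq⟩ := hsol i hi
  have h0 : (0:ℝ) ∈ Set.Icc (0:ℝ) T := Set.left_mem_Icc.mpr (hs.1.trans hs.2)
  have e1 := hxeq t ht
  have e2 := hxeq s hs
  have hadd : (∫ τ in (0:ℝ)..s, fx N x m i τ) + (∫ τ in s..t, fx N x m i τ)
      = ∫ τ in (0:ℝ)..t, fx N x m i τ :=
    intervalIntegral.integral_add_adjacent_intervals
      (fx_integrable hsol hi h0 hs) (fx_integrable hsol hi hs ht)
  have e1' : x i t = x i 0 + ∫ τ in (0:ℝ)..t, fx N x m i τ := e1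
  have e2' : x i s = x i 0 + ∫ τ in (0:ℝ)..s, fx N x m i τ := e2
  rw [e1', e2', ← hadd]; ring

/-- pointwise comparison of velocity fields -/
lemma fx_le (hN : 1 ≤ N) {a b : ℕ} (ha : a ∈ Finset.Icc 1 N) (hb : b ∈ Finset.Icc 1 N)
    {τ : ℝ} (hm : ∀ k ∈ Finset.Icc 1 N, 0 ≤ m k τ) (hba : x b τ ≤ x a τ) :
    fx N x m a τ ≤ fx N x m b τ := by
  rcases eq_or_ne a b with rfl | hab
  · exact le_refl _
  have hbmem : b ∈ (Finset.Icc 1 N).erase a := Finset.mem_erase.mpr ⟨Ne.symm hab, hb⟩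
  have hamem : a ∈ (Finset.Icc 1 N).erase b := Finset.mem_erase.mpr ⟨hab, ha⟩
  set J := ((Finset.Icc 1 N).erase a).erase b with hJ
  have hJ' : ((Finset.Icc 1 N).erase b).erase a = J := by
    rw [hJ, Finset.erase_right_comm]
  have splitA : ∑ j ∈ (Finset.Icc 1 N).erase a, m j τ * Real.sign (x j τ - x a τ)
      = m b τ * Real.sign (x b τ - x a τ) + ∑ j ∈ J, m j τ * Real.sign (x j τ - x a τ) :=
    (Finset.add_sum_erase _ _ hbmem).symm
  have splitB : ∑ j ∈ (Finset.Icc 1 N).erase b, m j τ * Real.sign (x j τ - x b τ)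
      = m a τ * Real.sign (x a τ - x b τ) + ∑ j ∈ J, m j τ * Real.sign (x j τ - x b τ) := by
    rw [← hJ']
    exact (Finset.add_sum_erase _ _ hamem).symm
  have hsum : ∑ j ∈ J, m j τ * Real.sign (x j τ - x a τ)
      ≤ ∑ j ∈ J, m j τ * Real.sign (x j τ - x b τ) := by
    refine Finset.sum_le_sum fun k hk => ?_
    have hk' : k ∈ Finset.Icc 1 N := Finset.mem_of_mem_erase (Finset.mem_of_mem_erase hk)
    exact mul_le_mul_of_nonneg_left (realSign_mono (by linarith)) (hm k hk')
  have hterm1 : m b τ * Real.sign (x b τ - x a τ) ≤ 0 :=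
    mul_nonpos_of_nonneg_of_nonpos (hm b hb) (realSign_nonpos (by linarith))
  have hterm2 : 0 ≤ m a τ * Real.sign (x a τ - x b τ) :=
    mul_nonneg (hm a ha) (realSign_nonneg (by linarith))
  have hNpos : (0:ℝ) ≤ 1 / (N:ℝ) := by positivity
  rw [fx, fx]
  apply mul_le_mul_of_nonneg_left _ hNpos
  rw [splitA, splitB]
  linarith

/-- No crossing: if `x a ≤ x b` at `t0` then also at any later `t1`. -/
lemma no_cross (hsol : IsCoulombSol S N T x m) (hN : 1 ≤ N)
    (hmnn : ∀ k ∈ Finset.Icc 1 N, ∀ τ ∈ Set.Icc (0:ℝ) T, 0 ≤ m k τ)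
    {a b : ℕ} (ha : a ∈ Finset.Icc 1 N) (hb : b ∈ Finset.Icc 1 N)
    {t0 t1 : ℝ} (ht0 : t0 ∈ Set.Icc (0:ℝ) T) (ht1 : t1 ∈ Set.Icc (0:ℝ) T)
    (h01 : t0 ≤ t1) (hab : x a t0 ≤ x b t0) : x a t1 ≤ x b t1 := by
  by_contra hcon
  push_neg at hcon
  set u : ℝ → ℝ := fun t => x a t - x b t with hu
  have hucont : ContinuousOn u (Set.Icc 0 T) := ((hsol a ha).1).sub ((hsol b hb).1)
  have hsubI : Set.Icc t0 t1 ⊆ Set.Icc (0:ℝ) T := Set.Icc_subset_Icc ht0.1 ht1.2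
  set K : Set ℝ := Set.Icc t0 t1 ∩ u ⁻¹' Set.Iic 0 with hK
  have hKclosed : IsClosed K :=
    (hucont.mono hsubI).preimage_isClosed_of_isClosed isClosed_Icc isClosed_Iic
  have hKcpt : IsCompact K :=
    isCompact_Icc.of_isClosed_subset hKclosed Set.inter_subset_left
  have hKne : K.Nonempty := ⟨t0, Set.left_mem_Icc.mpr h01, by simpa [hu] using sub_nonpos.mpr hab⟩
  set s := sSup K with hs
  have hsK : s ∈ K := hKcpt.sSup_mem hKne
  have hsmem : s ∈ Set.Icc t0 t1 := hsK.1
  have hus : u s ≤ 0 := hsK.2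
  have hut1 : 0 < u t1 := sub_pos.mpr hcon
  have hst1 : s < t1 := hsmem.2.lt_of_ne (fun h => by rw [h] at hus; linarith)
  have hsIcc : s ∈ Set.Icc (0:ℝ) T := hsubI hsmem
  have hpos : ∀ τ ∈ Set.Ioc s t1, 0 < u τ := by
    intro τ hτ
    by_contra hle
    push_neg at hle
    have hτK : τ ∈ K := ⟨⟨hsmem.1.trans hτ.1.le, hτ.2⟩, hle⟩
    exact absurd (le_csSup hKcpt.bddAbove hτK) (not_le.mpr hτ.1)
  have hia := fx_integrable hsol ha hsIcc ht1
  have hib := fx_integrable hsol hb hsIcc ht1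
  have hea := x_increment hsol ha hsIcc ht1
  have heb := x_increment hsol hb hsIcc ht1
  have hint : (∫ τ in s..t1, (fx N x m a τ - fx N x m b τ)) ≤ 0 := by
    rw [intervalIntegral.integral_of_le hst1.le]
    refine setIntegral_nonpos measurableSet_Ioc fun τ hτ => ?_
    have hτI : τ ∈ Set.Icc (0:ℝ) T := ⟨hsIcc.1.trans hτ.1.le, hτ.2.trans ht1.2⟩
    have := fx_le (x := x) hN ha hb (fun k hk => hmnn k hk τ hτI)
      (by have := hpos τ hτ; simp only [hu] at this; linarith)
    linarith
  rw [intervalIntegral.integral_sub hia hib] at hint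
  have : u t1 ≤ u s := by simp only [hu]; rw [hea, heb]; ring_nf; linarith
  linarith

lemma gm_continuousOn (hsol : IsCoulombSol S N T x m) (hScont : Continuous S)
    {i : ℕ} (hi : i ∈ Finset.Icc 1 N) :
    ContinuousOn (gm S N x m i) (Set.Icc 0 T) := by
  obtain ⟨hxc, hmc, _, _⟩ := hsol i hi
  rw [show gm S N x m i = fun τ => (1/(N:ℝ)) * ∑ j ∈ Finset.Icc 1 N,
    m i τ * m j τ * S (x j τ - x i τ) from rfl]
  exact continuousOn_const.mul (continuousOn_finset_sum _ fun j hj =>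
    (hmc.mul (hsol j hj).2.1).mul (hScont.comp_continuousOn ((hsol j hj).1.sub hxc)))

lemma gm_bound (hsol : IsCoulombSol S N T x m) {B CS : ℝ} (hB0 : 0 ≤ B) (hCS0 : 0 ≤ CS)
    (hB : ∀ j ∈ Finset.Icc 1 N, ∀ τ ∈ Set.Icc (0:ℝ) T, |m j τ| ≤ B)
    (hCS : ∀ y, |S y| ≤ CS)
    {i : ℕ} {τ : ℝ} (hτ : τ ∈ Set.Icc (0:ℝ) T) :
    |gm S N x m i τ| ≤ (B * CS) * |m i τ| := by
  rcases Nat.eq_zero_or_pos N with hN | hN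
  · simp [gm, hN]; positivity
  have h1 : |∑ j ∈ Finset.Icc 1 N, m i τ * m j τ * S (x j τ - x i τ)|
      ≤ ∑ j ∈ Finset.Icc 1 N, |m i τ| * B * CS := by
    refine (Finset.abs_sum_le_sum_abs _ _).trans (Finset.sum_le_sum fun j hj => ?_)
    rw [abs_mul, abs_mul]
    have h2 : |m i τ| * |m j τ| ≤ |m i τ| * B :=
      mul_le_mul_of_nonneg_left (hB j hj τ hτ) (abs_nonneg _)
    exact mul_le_mul h2 (hCS _) (abs_nonneg _) (by positivity)
  have h2 : (∑ j ∈ Finset.Icc 1 N, |m i τ| * B * CS) = (N:ℝ) * (|m i τ| * B * CS) := by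
    rw [Finset.sum_const, nsmul_eq_mul]; simp
  have h3 : |gm S N x m i τ| ≤ (1/(N:ℝ)) * ((N:ℝ) * (|m i τ| * B * CS)) := by
    rw [gm, abs_mul, abs_of_nonneg (by positivity : (0:ℝ) ≤ 1/(N:ℝ))]
    exact mul_le_mul_of_nonneg_left (h1.trans h2.le) (by positivity)
  have hNne : (N:ℝ) ≠ 0 := by positivity
  calc |gm S N x m i τ| ≤ (1/(N:ℝ)) * ((N:ℝ) * (|m i τ| * B * CS)) := h3
    _ = (B * CS) * |m i τ| := by field_simp

lemma m_hasDeriv (hsol : IsCoulombSol S N T x m) (hScont : Continuous S)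
    {i : ℕ} (hi : i ∈ Finset.Icc 1 N) {t : ℝ} (ht : t ∈ Set.Icc (0:ℝ) T) :
    HasDerivWithinAt (m i) (gm S N x m i t) (Set.Icc 0 T) t := by
  obtain ⟨hxc, hmc, hxeq, hmeq⟩ := hsol i hi
  have hgc := gm_continuousOn hsol hScont hi
  haveI : Fact (t ∈ Set.Icc (0:ℝ) T) := ⟨ht⟩
  have h0T : (0:ℝ) ∈ Set.Icc (0:ℝ) T := Set.left_mem_Icc.mpr (ht.1.trans ht.2)
  have hint : IntervalIntegrable (gm S N x m i) volume 0 t :=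
    (hgc.mono (Set.uIcc_subset_Icc h0T ht)).intervalIntegrable
  have hFTC : HasDerivWithinAt (fun u => ∫ τ in (0:ℝ)..u, gm S N x m i τ)
      (gm S N x m i t) (Set.Icc 0 T) t :=
    intervalIntegral.integral_hasDerivWithinAt_right hint
      ⟨Set.Icc 0 T, self_mem_nhdsWithin, hgc.aestronglyMeasurable measurableSet_Icc⟩
      (hgc t ht)
  have hFTC' := hFTC.const_add (m i 0)
  exact hFTC'.congr (fun y hy => hmeq y hy) (hmeq t ht)

lemma mass_pos (hsol : IsCoulombSol S N T x m) (hScont : Continuous S)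
    (hSbdd : ∃ C, ∀ y, |S y| ≤ C)
    (hm0 : ∀ i ∈ Finset.Icc 1 N, 0 < m i 0) :
    ∀ i ∈ Finset.Icc 1 N, ∀ t ∈ Set.Icc (0:ℝ) T, 0 < m i t := by
  obtain ⟨CS₀, hCS₀⟩ := hSbdd
  have hCS : ∀ y, |S y| ≤ max CS₀ 0 := fun y => (hCS₀ y).trans (le_max_left _ _)
  have hCS0 : (0:ℝ) ≤ max CS₀ 0 := le_max_right _ _
  obtain ⟨B, hB0, hB⟩ := exists_mass_bound hsol
  set C := B * max CS₀ 0 with hC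
  have hC0 : 0 ≤ C := by positivity
  intro i hi t ht
  by_contra hle
  push_neg at hle
  obtain ⟨hxc, hmc, _, _⟩ := hsol i hi
  have hsub : Set.Icc (0:ℝ) t ⊆ Set.Icc (0:ℝ) T := Set.Icc_subset_Icc le_rfl ht.2
  have hmc' : ContinuousOn (m i) (Set.Icc 0 t) := hmc.mono hsub
  have hmem0 : (0:ℝ) ∈ Set.Icc (m i t) (m i 0) := ⟨hle, (hm0 i hi).le⟩
  obtain ⟨t0, ht0mem, ht0⟩ := intermediate_value_Icc' ht.1 hmc' hmem0
  have ht0T : t0 ∈ Set.Icc (0:ℝ) T := hsub ht0mem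
  have hmaps : Set.MapsTo (fun u : ℝ => t0 - u) (Set.Icc 0 t0) (Set.Icc 0 T) := by
    intro u hu
    simp only [Set.mem_Icc] at hu ⊢
    constructor <;> linarith [ht0T.2]
  have hcontrev : ContinuousOn (fun s => m i (t0 - s)) (Set.Icc 0 t0) :=
    hmc.comp ((continuous_const.sub continuous_id).continuousOn) hmaps
  have hderivrev : ∀ s ∈ Set.Ico (0:ℝ) t0,
      HasDerivWithinAt (fun u => m i (t0 - u)) (gm S N x m i (t0 - s) * (-1)) (Set.Ici s) s := by
    intro s hs
    have hmemts : t0 - s ∈ Set.Icc (0:ℝ) T := hmaps ⟨hs.1, hs.2.le⟩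
    have hmd := m_hasDeriv hsol hScont hi hmemts
    have hinner : HasDerivWithinAt (fun u : ℝ => t0 - u) (-1) (Set.Icc 0 t0) s :=
      ((hasDerivAt_id s).const_sub t0).hasDerivWithinAt
    have hcomp := HasDerivWithinAt.comp s hmd hinner hmaps
    refine HasDerivWithinAt.mono_of_mem_nhdsWithin hcomp ?_
    refine mem_nhdsWithin.mpr ⟨Set.Iio t0, isOpen_Iio, hs.2, ?_⟩
    rintro u ⟨hu1, hu2⟩
    exact ⟨hs.1.trans hu2, le_of_lt hu1⟩
  have hboundrev : ∀ s ∈ Set.Ico (0:ℝ) t0,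
      ‖gm S N x m i (t0 - s) * (-1)‖ ≤ C * ‖m i (t0 - s)‖ + 0 := by
    intro s hs
    have hmemts : t0 - s ∈ Set.Icc (0:ℝ) T := hmaps ⟨hs.1, hs.2.le⟩
    rw [Real.norm_eq_abs, Real.norm_eq_abs, abs_mul, abs_neg, abs_one, mul_one, add_zero]
    exact gm_bound hsol hB0 hCS0 hB hCS hmemts
  have key := norm_le_gronwallBound_of_norm_deriv_right_le (δ := 0) (K := C) (ε := 0)
    hcontrev hderivrev (by simp [ht0]) hboundrev t0 (Set.right_mem_Icc.mpr ht0mem.1)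
  rw [gronwallBound_ε0_δ0] at key
  simp only [sub_self] at key
  rw [Real.norm_eq_abs] at key
  have := hm0 i hi
  have habs : |m i 0| = m i 0 := abs_of_pos this
  linarith [key, habs.symm.le.trans key]

/-- merging set of a pair -/
def mset (x : ℕ → ℝ → ℝ) (T : ℝ) (i j : ℕ) : Set ℝ :=
  {t | t ∈ Set.Icc 0 T ∧ x i t = x j t}

/-- merging time of a pair -/
def mtime (x : ℕ → ℝ → ℝ) (T : ℝ) (i j : ℕ) : ℝ := sInf (mset x T i j)

lemma mset_closed {i j : ℕ} (hxi : ContinuousOn (x i) (Set.Icc 0 T))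
    (hxj : ContinuousOn (x j) (Set.Icc 0 T)) : IsClosed (mset x T i j) := by
  have : mset x T i j = Set.Icc 0 T ∩ (fun t => x i t - x j t) ⁻¹' {0} := by
    ext t
    simp [mset, sub_eq_zero]
  rw [this]
  exact (hxi.sub hxj).preimage_isClosed_of_isClosed isClosed_Icc isClosed_singleton

lemma mtime_mem {i j : ℕ} (hxi : ContinuousOn (x i) (Set.Icc 0 T))
    (hxj : ContinuousOn (x j) (Set.Icc 0 T)) (hne : (mset x T i j).Nonempty) :
    mtime x T i j ∈ mset x T i j :=
  (mset_closed hxi hxj).csInf_mem hne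
    ((bddBelow_Icc : BddBelow (Set.Icc (0:ℝ) T)).mono (fun t ht => ht.1))

lemma mtime_le {i j : ℕ} {t : ℝ} (ht : t ∈ mset x T i j) : mtime x T i j ≤ t :=
  csInf_le ((bddBelow_Icc : BddBelow (Set.Icc (0:ℝ) T)).mono (fun s hs => hs.1)) ht


end CoulombAux
end

open CoulombAux

/-- There is a finite partition `0 = T₀ < T₁ < … < T_k = T`
(`1 ≤ k ≤ N`) of the time interval such that on each `[T_{l-1}, T_l)` any two
opinions are either always equal or always distinct; moreover the initial
ordering of the opinions is preserved. -/
theorem collision_partition_and_order_preservation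
    (N : ℕ) (hN : 1 ≤ N) (T : ℝ) (hT : 0 < T)
    (S : ℝ → ℝ) (hScont : Continuous S) (hSodd : ∀ y, S (-y) = -S y)
    (hSbdd : ∃ C, ∀ y, |S y| ≤ C)
    (x m : ℕ → ℝ → ℝ) (hsol : IsCoulombSol S N T x m)
    (horder0 : ∀ i j, 1 ≤ i → i < j → j ≤ N → x i 0 < x j 0)
    (hm0 : ∀ i ∈ Finset.Icc 1 N, 0 < m i 0)
    (hmass0 : (1 / (N : ℝ)) * ∑ i ∈ Finset.Icc 1 N, m i 0 = 1) :
    (∃ k, 1 ≤ k ∧ k ≤ N ∧ ∃ Ts : ℕ → ℝ,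
      Ts 0 = 0 ∧ Ts k = T ∧ (∀ l < k, Ts l < Ts (l + 1)) ∧
      ∀ l, 1 ≤ l → l ≤ k → ∀ i ∈ Finset.Icc 1 N, ∀ j ∈ Finset.Icc 1 N,
        (∀ t ∈ Set.Ico (Ts (l - 1)) (Ts l), x i t = x j t) ∨
        (∀ t ∈ Set.Ico (Ts (l - 1)) (Ts l), x i t ≠ x j t)) ∧
    (∀ t ∈ Set.Icc (0 : ℝ) T, ∀ i j, 1 ≤ i → i ≤ j → j ≤ N → x i t ≤ x j t) := by
  classical
  have hmnn : ∀ k ∈ Finset.Icc 1 N, ∀ τ ∈ Set.Icc (0:ℝ) T, 0 ≤ m k τ :=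
    fun k hk τ hτ => (mass_pos hsol hScont hSbdd hm0 k hk τ hτ).le
  -- order preservation
  have horder : ∀ t ∈ Set.Icc (0:ℝ) T, ∀ i j, 1 ≤ i → i ≤ j → j ≤ N → x i t ≤ x j t := by
    intro t ht i j h1 hij hjN
    rcases eq_or_lt_of_le hij with rfl | hlt
    · exact le_rfl
    have hi : i ∈ Finset.Icc 1 N := Finset.mem_Icc.mpr ⟨h1, hlt.le.trans hjN⟩
    have hj : j ∈ Finset.Icc 1 N := Finset.mem_Icc.mpr ⟨h1.trans hij, hjN⟩
    exact no_cross hsol hN hmnn hi hj (Set.left_mem_Icc.mpr hT.le) ht ht.1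
      (horder0 i j h1 hlt hjN).le
  refine ⟨?_, horder⟩
  -- stickiness
  have hsticky : ∀ a ∈ Finset.Icc 1 N, ∀ b ∈ Finset.Icc 1 N,
      ∀ t0 ∈ Set.Icc (0:ℝ) T, ∀ t1 ∈ Set.Icc (0:ℝ) T, t0 ≤ t1 →
      x a t0 = x b t0 → x a t1 = x b t1 := by
    intro a ha b hb t0 ht0 t1 ht1 h01 heq
    exact le_antisymm (no_cross hsol hN hmnn ha hb ht0 ht1 h01 heq.le)
      (no_cross hsol hN hmnn hb ha ht0 ht1 h01 heq.ge)
  -- membership characterization for merging pairs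
  have hmem_iff : ∀ a ∈ Finset.Icc 1 N, ∀ b ∈ Finset.Icc 1 N,
      (mset x T a b).Nonempty → ∀ t ∈ Set.Icc (0:ℝ) T,
      (x a t = x b t ↔ mtime x T a b ≤ t) := by
    intro a ha b hb hne t ht
    have hmm := mtime_mem (hsol a ha).1 (hsol b hb).1 hne
    constructor
    · intro h
      exact mtime_le ⟨ht, h⟩
    · intro h
      exact hsticky a ha b hb _ hmm.1 t ht h hmm.2
  -- merging time is positive
  have hmt_pos : ∀ a ∈ Finset.Icc 1 N, ∀ b ∈ Finset.Icc 1 N, a ≠ b →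
      (mset x T a b).Nonempty → 0 < mtime x T a b := by
    intro a ha b hb hab hne
    have hmm := mtime_mem (hsol a ha).1 (hsol b hb).1 hne
    rcases hmm.1.1.eq_or_lt with h0 | h0
    · exfalso
      have := hmm.2
      rw [← h0] at this
      rcases lt_or_gt_of_ne hab with h | h
      · exact absurd this (horder0 a b (Finset.mem_Icc.mp ha).1 h (Finset.mem_Icc.mp hb).2).ne
      · exact absurd this.symm (horder0 b a (Finset.mem_Icc.mp hb).1 h (Finset.mem_Icc.mp ha).2).ne
    · exact h0
  -- every merging time of a pair a < b is a merging time of an adjacent pair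
  have hadjacent : ∀ a ∈ Finset.Icc 1 N, ∀ b ∈ Finset.Icc 1 N, a < b →
      (mset x T a b).Nonempty → ∃ l ∈ Finset.Ico 1 N,
        (mset x T l (l+1)).Nonempty ∧ mtime x T l (l+1) = mtime x T a b := by
    intro a ha b hb hab hne
    obtain ⟨ha1, haN⟩ := Finset.mem_Icc.mp ha
    obtain ⟨hb1, hbN⟩ := Finset.mem_Icc.mp hb
    set σ := mtime x T a b with hσdef
    have hσmem := mtime_mem (hsol a ha).1 (hsol b hb).1 hne
    have hσIcc : σ ∈ Set.Icc (0:ℝ) T := hσmem.1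
    have hmid : ∀ c, a ≤ c → c ≤ b → x c σ = x a σ := by
      intro c hac hcb
      have h1 : x a σ ≤ x c σ := horder σ hσIcc a c ha1 hac (hcb.trans hbN)
      have h2 : x c σ ≤ x b σ := horder σ hσIcc c b (ha1.trans hac) hcb hbN
      exact le_antisymm (h2.trans (le_of_eq hσmem.2.symm)) h1
    have hadj : ∀ l, a ≤ l → l + 1 ≤ b → σ ∈ mset x T l (l+1) := by
      intro l hal hlb
      refine ⟨hσIcc, ?_⟩
      rw [hmid l hal (by omega), hmid (l+1) (by omega) hlb]
    have hLne : (Finset.Ico a b).Nonempty := by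
      rw [Finset.nonempty_Ico]; exact hab
    set σs := (Finset.Ico a b).sup' hLne (fun l => mtime x T l (l+1)) with hσsdef
    have hle : σs ≤ σ := by
      refine Finset.sup'_le _ _ fun l hl => ?_
      obtain ⟨hal, hlb⟩ := Finset.mem_Ico.mp hl
      exact mtime_le (hadj l hal (by omega))
    obtain ⟨ls, hls, hseq⟩ := Finset.exists_mem_eq_sup' hLne (fun l => mtime x T l (l+1))
    obtain ⟨hals, hlsb⟩ := Finset.mem_Ico.mp hls
    have hmemI : ∀ l ∈ Finset.Ico a b, l ∈ Finset.Icc 1 N ∧ l + 1 ∈ Finset.Icc 1 N := by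
      intro l hl
      obtain ⟨hal, hlb⟩ := Finset.mem_Ico.mp hl
      constructor <;> (rw [Finset.mem_Icc]; omega)
    have hnel : ∀ l ∈ Finset.Ico a b, (mset x T l (l+1)).Nonempty := by
      intro l hl
      obtain ⟨hal, hlb⟩ := Finset.mem_Ico.mp hl
      exact ⟨σ, hadj l hal (by omega)⟩
    have hσsIcc : σs ∈ Set.Icc (0:ℝ) T := by
      rw [hσsdef, hseq]
      exact (mtime_mem (hsol ls (hmemI ls hls).1).1
        (hsol (ls+1) (hmemI ls hls).2).1 (hnel ls hls)).1
    have hadjeq : ∀ l ∈ Finset.Ico a b, x l σs = x (l+1) σs := by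
      intro l hl
      have h1 : mtime x T l (l+1) ≤ σs := by
        rw [hσsdef]; exact Finset.le_sup' (fun l => mtime x T l (l+1)) hl
      exact (hmem_iff l (hmemI l hl).1 (l+1) (hmemI l hl).2 (hnel l hl) σs hσsIcc).mpr h1
    have hchain : ∀ c, a ≤ c → c ≤ b → x a σs = x c σs := by
      intro c hac hcb
      induction c, hac using Nat.le_induction with
      | base => rfl
      | succ c hc ih =>
        rw [ih (by omega), hadjeq c (Finset.mem_Ico.mpr ⟨hc, by omega⟩)]
    have hge : σ ≤ σs := mtime_le ⟨hσsIcc, hchain b hab.le le_rfl⟩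
    have hσeq : σs = σ := le_antisymm hle hge
    refine ⟨ls, Finset.mem_Ico.mpr ⟨by omega, by omega⟩, hnel ls hls, ?_⟩
    have h1 : mtime x T ls (ls+1) = σs := by rw [hσsdef]; exact hseq.symm
    rw [h1, hσeq]
  -- the finite set of partition points
  set AF : Finset ℝ := ((Finset.Ico 1 N).filter (fun l => (mset x T l (l+1)).Nonempty ∧
      mtime x T l (l+1) < T)).image (fun l => mtime x T l (l+1)) with hAF
  set PF : Finset ℝ := insert 0 (insert T AF) with hPF
  have hPFmem : ∀ y ∈ PF, 0 ≤ y ∧ y ≤ T := by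
    intro y hy
    rw [hPF] at hy
    simp only [Finset.mem_insert] at hy
    rcases hy with rfl | rfl | hy
    · exact ⟨le_rfl, hT.le⟩
    · exact ⟨hT.le, le_rfl⟩
    · rw [hAF] at hy
      obtain ⟨l, hl, rfl⟩ := Finset.mem_image.mp hy
      obtain ⟨hlI, hlne, hlT⟩ : l ∈ Finset.Ico 1 N ∧ (mset x T l (l+1)).Nonempty ∧
          mtime x T l (l+1) < T := by
        have := Finset.mem_filter.mp hl
        exact ⟨this.1, this.2.1, this.2.2⟩
      have hmemI : l ∈ Finset.Icc 1 N ∧ l+1 ∈ Finset.Icc 1 N := by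
        rw [Finset.mem_Ico] at hlI
        constructor <;> (rw [Finset.mem_Icc]; omega)
      have hmm := (mtime_mem (hsol l hmemI.1).1 (hsol (l+1) hmemI.2).1 hlne).1
      exact ⟨hmm.1, hmm.2⟩
  have h0PF : (0:ℝ) ∈ PF := by simp [hPF]
  have hTPF : T ∈ PF := by simp [hPF]
  have hcard2 : 2 ≤ PF.card := Finset.one_lt_card.mpr ⟨0, h0PF, T, hTPF, hT.ne⟩
  have hcardle : PF.card ≤ N + 1 := by
    have h1 : AF.card ≤ N - 1 := by
      calc AF.card ≤ ((Finset.Ico 1 N).filter (fun l => (mset x T l (l+1)).Nonempty ∧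
            mtime x T l (l+1) < T)).card := Finset.card_image_le
        _ ≤ (Finset.Ico 1 N).card := Finset.card_filter_le _ _
        _ = N - 1 := by rw [Nat.card_Ico]
    have h2 := Finset.card_insert_le T AF
    have h3 := Finset.card_insert_le (0:ℝ) (insert T AF)
    rw [← hPF] at h3
    omega
  set k := PF.card - 1 with hk
  have hkcard : PF.card = k + 1 := by omega
  set emb := PF.orderEmbOfFin hkcard with hemb
  set Ts : ℕ → ℝ := fun l => if h : l < k + 1 then emb ⟨l, h⟩ else T with hTsdef
  have hTsval : ∀ l (h : l < k + 1), Ts l = emb ⟨l, h⟩ := by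
    intro l h
    rw [hTsdef]
    exact dif_pos h
  have hPFne : PF.Nonempty := ⟨0, h0PF⟩
  have hmin : PF.min' hPFne = 0 :=
    le_antisymm (Finset.min'_le _ 0 h0PF) (Finset.le_min' _ _ _ fun y hy => (hPFmem y hy).1)
  have hmax : PF.max' hPFne = T :=
    le_antisymm (Finset.max'_le _ _ _ fun y hy => (hPFmem y hy).2) (Finset.le_max' _ T hTPF)
  have hTs0 : Ts 0 = 0 := by
    rw [hTsval 0 (by omega), ← hmin]
    exact Finset.orderEmbOfFin_zero hkcard (by omega)
  have hTsk : Ts k = T := by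
    rw [hTsval k (by omega)]
    exact (Finset.orderEmbOfFin_last hkcard (by omega)).trans hmax
  have hmono : ∀ l < k, Ts l < Ts (l + 1) := by
    intro l hl
    rw [hTsval l (by omega), hTsval (l+1) (by omega)]
    exact emb.strictMono (by simp [Fin.lt_def])
  have hTsmem : ∀ l (h : l < k + 1), Ts l ∈ PF := by
    intro l h
    rw [hTsval l h]
    exact Finset.orderEmbOfFin_mem PF hkcard _
  have hgap : ∀ l, 1 ≤ l → l ≤ k → ∀ y ∈ PF, y ≤ Ts (l-1) ∨ Ts l ≤ y := by
    intro l hl1 hlk y hy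
    have hyr : y ∈ Set.range emb := by
      rw [hemb, Finset.range_orderEmbOfFin]
      exact_mod_cast hy
    obtain ⟨idx, rfl⟩ := hyr
    rcases le_or_gt (idx : ℕ) (l-1) with h | h
    · left
      rw [hTsval (l-1) (by omega)]
      exact emb.le_iff_le.mpr (by simp [Fin.le_def]; omega)
    · right
      rw [hTsval l (by omega)]
      exact emb.le_iff_le.mpr (by simp [Fin.le_def]; omega)
  -- main pattern claim for ordered pairs
  have hmain : ∀ l, 1 ≤ l → l ≤ k → ∀ a ∈ Finset.Icc 1 N, ∀ b ∈ Finset.Icc 1 N, a < b →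
      (∀ t ∈ Set.Ico (Ts (l - 1)) (Ts l), x a t = x b t) ∨
      (∀ t ∈ Set.Ico (Ts (l - 1)) (Ts l), x a t ≠ x b t) := by
    intro l hl1 hlk a ha b hb hab
    have hTl1Icc : 0 ≤ Ts (l-1) ∧ Ts (l-1) ≤ T := hPFmem _ (hTsmem (l-1) (by omega))
    have hTlIcc : 0 ≤ Ts l ∧ Ts l ≤ T := hPFmem _ (hTsmem l (by omega))
    have hIcoSub : Set.Ico (Ts (l-1)) (Ts l) ⊆ Set.Icc (0:ℝ) T := fun t ht =>
      ⟨hTl1Icc.1.trans ht.1, ht.2.le.trans hTlIcc.2⟩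
    by_cases hne : (mset x T a b).Nonempty
    · have hσmem := mtime_mem (hsol a ha).1 (hsol b hb).1 hne
      by_cases hc : mtime x T a b ≤ Ts (l-1)
      · left
        intro t ht
        exact (hmem_iff a ha b hb hne t (hIcoSub ht)).mpr (hc.trans ht.1)
      · right
        push_neg at hc
        have hTlσ : Ts l ≤ mtime x T a b := by
          rcases eq_or_lt_of_le hσmem.1.2 with hσT | hσT
          · rw [hσT]
            exact hTlIcc.2
          · have hσPF : mtime x T a b ∈ PF := by
              obtain ⟨ls, hls, hlsne, hlseq⟩ := hadjacent a ha b hb hab hne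
              rw [hPF]
              have : mtime x T a b ∈ AF := by
                rw [hAF]
                refine Finset.mem_image.mpr ⟨ls, Finset.mem_filter.mpr ⟨hls, hlsne, ?_⟩, hlseq⟩
                rw [hlseq]
                exact hσT
              simp [this]
            rcases hgap l hl1 hlk _ hσPF with h | h
            · exact absurd h (not_le.mpr hc)
            · exact h
        intro t ht heq
        have h1 : mtime x T a b ≤ t := (hmem_iff a ha b hb hne t (hIcoSub ht)).mp heq
        have h2 := ht.2
        linarith
    · right
      intro t ht heq
      exact hne ⟨t, hIcoSub ht, heq⟩
  refine ⟨k, by omega, by omega, Ts, hTs0, hTsk, hmono, ?_⟩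
  intro l hl1 hlk i hi j hj
  rcases lt_trichotomy i j with hij | rfl | hij
  · exact hmain l hl1 hlk i hi j hj hij
  · left
    intro t _
    rfl
  · rcases hmain l hl1 hlk j hj i hi hij with h | h
    · left
      intro t ht
      exact (h t ht).symm
    · right
      intro t ht heq
      exact h t ht heq.symm
end

section
/- Let S : ℝ → ℝ be odd, continuous and bounded, and let (x_1,…,x_N,m_1,…,m_N) be a classical solution on [0,T̄] of the weighted Coulomb opinion dynamics system with m_i(0) > 0 for all i and (1/N)·∑_{i=1}^N m_i(0) = 1. Suppose in addition |x_i(0)| ≤ X̄ for all 1 ≤ i ≤ N. Then there exists R̄ > 0, depending only on ‖S‖_∞, X̄ and T̄ (and not on N), such that for all t ∈ [0,T̄]: F_N(t,x) = 1/2 whenever x > R̄, and F_N(t,x) = −1/2 whenever x < −R̄. -/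
open MeasureTheory Filter

lemma sum_antisym (S : ℝ → ℝ) (hodd : ∀ y, S (-y) = -S y) (s : Finset ℕ) (a b : ℕ → ℝ) :
    ∑ i ∈ s, ∑ j ∈ s, a i * a j * S (b j - b i) = 0 := by
  have hswap : ∑ i ∈ s, ∑ j ∈ s, a i * a j * S (b j - b i)
      = ∑ i ∈ s, ∑ j ∈ s, -(a i * a j * S (b j - b i)) := by
    rw [Finset.sum_comm]
    refine Finset.sum_congr rfl fun j _ => Finset.sum_congr rfl fun i _ => ?_
    have h1 : S (b j - b i) = -S (b i - b j) := by
      rw [show b j - b i = -(b i - b j) by ring, hodd]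
    rw [h1]; ring
  have hneg : ∑ i ∈ s, ∑ j ∈ s, -(a i * a j * S (b j - b i))
      = -∑ i ∈ s, ∑ j ∈ s, a i * a j * S (b j - b i) := by
    simp [Finset.sum_neg_distrib]
  rw [hneg] at hswap
  linarith

lemma abs_real_sign_le_one (z : ℝ) : |Real.sign z| ≤ 1 := by
  rcases lt_trichotomy z 0 with h | h | h
  · rw [Real.sign_of_neg h]; norm_num
  · rw [h, Real.sign_zero]; norm_num
  · rw [Real.sign_of_pos h]; norm_num


/-- Uniformly in `N`, the shifted empirical distribution function
`F_N` equals `±1/2` outside a bounded spatial region: there is `R̄ > 0`, depending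
only on the sup norm bound `Ms` of `S`, the initial spatial bound `X̄` and the time
horizon `T̄` (and not on `N`), such that `F_N(t,x) = 1/2` for `x > R̄` and
`F_N(t,x) = -1/2` for `x < -R̄`. -/
theorem FN_constant_far_away
    (Ms Xbar T : ℝ) (hMs : 0 ≤ Ms) (hX : 0 ≤ Xbar) (hT : 0 < T) :
    ∃ R > (0 : ℝ), ∀ S : ℝ → ℝ, Continuous S → (∀ y, S (-y) = -S y) →
      (∀ y, |S y| ≤ Ms) →
      ∀ N : ℕ, 1 ≤ N → ∀ x m : ℕ → ℝ → ℝ, IsCoulombSol S N T x m →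
        (∀ i ∈ Finset.Icc 1 N, 0 < m i 0) →
        (1 / (N : ℝ)) * ∑ i ∈ Finset.Icc 1 N, m i 0 = 1 →
        (∀ i ∈ Finset.Icc 1 N, |x i 0| ≤ Xbar) →
        ∀ t ∈ Set.Icc (0 : ℝ) T, ∀ y : ℝ,
          (R < y → FNemp N x m t y = 1 / 2) ∧
          (y < -R → FNemp N x m t y = -(1 / 2)) := by
  refine ⟨Xbar + T + 1, by linarith, ?_⟩
  intro S hSc hSodd _hSb N hN x m hsol hm0 hmass hx0 t ht y
  set I := Finset.Icc 1 N with hIdef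
  have hNpos : (0:ℝ) < (N : ℝ) := by exact_mod_cast Nat.pos_of_ne_zero (by omega)
  have hNne : (N:ℝ) ≠ 0 := ne_of_gt hNpos
  -- the retraction onto [0,T]
  set π : ℝ → ℝ := fun τ => max 0 (min τ T) with hπdef
  have hπc : Continuous π := continuous_const.max (continuous_id.min continuous_const)
  have hπmem : ∀ τ, π τ ∈ Set.Icc (0:ℝ) T :=
    fun τ => ⟨le_max_left _ _, max_le hT.le (min_le_right _ _)⟩
  have hπeq : ∀ τ ∈ Set.Icc (0:ℝ) T, π τ = τ := by
    intro τ hτ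
    simp only [hπdef]
    rw [min_eq_left hτ.2, max_eq_right hτ.1]
  have hmc : ∀ i ∈ I, Continuous (fun τ => m i (π τ)) := fun i hi =>
    ((hsol i hi).2.1).comp_continuous hπc hπmem
  have hxc : ∀ i ∈ I, Continuous (fun τ => x i (π τ)) := fun i hi =>
    ((hsol i hi).1).comp_continuous hπc hπmem
  -- positivity of masses
  have hpos : ∀ i ∈ I, ∀ s ∈ Set.Icc (0:ℝ) T, 0 < m i s := by
    intro i hi
    set g : ℝ → ℝ :=
      fun τ => (1/(N:ℝ)) * ∑ j ∈ I, m j (π τ) * S (x j (π τ) - x i (π τ)) with hgdef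
    have hgc : Continuous g := by
      apply continuous_const.mul
      apply continuous_finset_sum
      intro j hj
      exact (hmc j hj).mul (hSc.comp ((hxc j hj).sub (hxc i hi)))
    set ψ : ℝ → ℝ := fun τ => m i (π τ) * g τ with hψdef
    have hψc : Continuous ψ := (hmc i hi).mul hgc
    set Fm : ℝ → ℝ := fun u => m i 0 + ∫ τ in (0:ℝ)..u, ψ τ with hFmdef
    set G : ℝ → ℝ := fun u => ∫ τ in (0:ℝ)..u, g τ with hGdef
    have hFm' : ∀ u, HasDerivAt Fm (ψ u) u := fun u =>
      ((hψc.integral_hasStrictDerivAt 0 u).hasDerivAt).const_add _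
    have hG' : ∀ u, HasDerivAt G (g u) u := fun u =>
      (hgc.integral_hasStrictDerivAt 0 u).hasDerivAt
    have hagree : ∀ s ∈ Set.Icc (0:ℝ) T, m i s = Fm s := by
      intro s hs
      have hsub : Set.uIcc (0:ℝ) s ⊆ Set.Icc 0 T := by
        rw [Set.uIcc_of_le hs.1]; exact Set.Icc_subset_Icc_right hs.2
      rw [(hsol i hi).2.2.2 s hs]
      simp only [hFmdef]
      congr 1
      apply intervalIntegral.integral_congr
      intro τ hτ
      have hπτ : π τ = τ := hπeq τ (hsub hτ)
      simp only [hψdef, hgdef, hπτ, Finset.mul_sum]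
      exact Finset.sum_congr rfl fun j _ => by ring
    have hh' : ∀ u ∈ Set.Icc (0:ℝ) T,
        HasDerivAt (fun u => Fm u * Real.exp (-(G u))) 0 u := by
      intro u hu
      have h1 : HasDerivAt (fun u => Real.exp (-(G u)))
          (Real.exp (-(G u)) * (-(g u))) u := ((hG' u).neg).exp
      have h2 := (hFm' u).mul h1
      have h3 : ψ u = Fm u * g u := by
        have : ψ u = m i u * g u := by simp only [hψdef, hπeq u hu]
        rw [this, hagree u hu]
      exact h2.congr_deriv (by rw [h3]; ring)
    have hFmc : Continuous Fm := continuous_iff_continuousAt.2 fun u => (hFm' u).continuousAt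
    have hGc : Continuous G := continuous_iff_continuousAt.2 fun u => (hG' u).continuousAt
    have hconst := constant_of_has_deriv_right_zero
      (f := fun u => Fm u * Real.exp (-(G u))) (a := 0) (b := T)
      ((hFmc.mul (Real.continuous_exp.comp hGc.neg)).continuousOn)
      (fun u hu => (hh' u (Set.mem_Icc_of_Ico hu)).hasDerivWithinAt)
    intro s hs
    have heq := hconst s hs
    have hFm0 : Fm 0 = m i 0 := by simp [hFmdef]
    have hG0 : G 0 = 0 := by simp [hGdef]
    simp only [hFm0, hG0, neg_zero, Real.exp_zero, mul_one] at heq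
    have hm0i := hm0 i hi
    have he1 : (0:ℝ) < Real.exp (-(G s)) := Real.exp_pos _
    rw [hagree s hs]
    nlinarith [heq, he1, hm0i]
  -- mass conservation
  have hsum0 : ∑ i ∈ I, m i 0 = (N:ℝ) := by
    field_simp at hmass
    linarith [hmass]
  have hcons : ∀ s ∈ Set.Icc (0:ℝ) T, ∑ i ∈ I, m i s = (N:ℝ) := by
    intro s hs
    have hsub : Set.uIcc (0:ℝ) s ⊆ Set.Icc 0 T := by
      rw [Set.uIcc_of_le hs.1]; exact Set.Icc_subset_Icc_right hs.2
    have hint : ∀ i ∈ I, IntervalIntegrable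
        (fun τ => (1/(N:ℝ)) * ∑ j ∈ I, m i τ * m j τ * S (x j τ - x i τ))
        volume 0 s := by
      intro i hi
      apply ContinuousOn.intervalIntegrable
      apply ContinuousOn.mono _ hsub
      apply continuousOn_const.mul
      apply continuousOn_finset_sum
      intro j hj
      exact (((hsol i hi).2.1).mul ((hsol j hj).2.1)).mul
        (hSc.comp_continuousOn (((hsol j hj).1).sub ((hsol i hi).1)))
    have hzero : ∀ τ : ℝ,
        ∑ i ∈ I, (1/(N:ℝ)) * ∑ j ∈ I, m i τ * m j τ * S (x j τ - x i τ) = 0 := by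
      intro τ
      rw [← Finset.mul_sum, sum_antisym S hSodd I (fun k => m k τ) (fun k => x k τ), mul_zero]
    calc ∑ i ∈ I, m i s
        = ∑ i ∈ I, (m i 0 + ∫ τ in (0:ℝ)..s,
            (1/(N:ℝ)) * ∑ j ∈ I, m i τ * m j τ * S (x j τ - x i τ)) :=
          Finset.sum_congr rfl fun i hi => (hsol i hi).2.2.2 s hs
      _ = ∑ i ∈ I, m i 0 + ∑ i ∈ I, ∫ τ in (0:ℝ)..s,
            (1/(N:ℝ)) * ∑ j ∈ I, m i τ * m j τ * S (x j τ - x i τ) :=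
          Finset.sum_add_distrib
      _ = ∑ i ∈ I, m i 0 + ∫ τ in (0:ℝ)..s,
            ∑ i ∈ I, (1/(N:ℝ)) * ∑ j ∈ I, m i τ * m j τ * S (x j τ - x i τ) := by
          rw [intervalIntegral.integral_finset_sum hint]
      _ = ∑ i ∈ I, m i 0 := by
          simp only [hzero, intervalIntegral.integral_zero, add_zero]
      _ = (N:ℝ) := hsum0
  -- uniform bound on positions
  have hxb : ∀ i ∈ I, ∀ s ∈ Set.Icc (0:ℝ) T, |x i s| ≤ Xbar + T := by
    intro i hi s hs
    have hbound : ∀ τ ∈ Set.uIoc (0:ℝ) s,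
        ‖(1/(N:ℝ)) * ∑ j ∈ I.erase i, m j τ * Real.sign (x j τ - x i τ)‖ ≤ 1 := by
      intro τ hτ
      have hτ' : τ ∈ Set.Icc (0:ℝ) T := by
        rw [Set.uIoc_of_le hs.1] at hτ
        exact ⟨hτ.1.le, hτ.2.trans hs.2⟩
      rw [Real.norm_eq_abs, abs_mul]
      have h1 : |∑ j ∈ I.erase i, m j τ * Real.sign (x j τ - x i τ)|
          ≤ ∑ j ∈ I.erase i, m j τ := by
        refine (Finset.abs_sum_le_sum_abs _ _).trans (Finset.sum_le_sum fun j hj => ?_)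
        have hmj := hpos j (Finset.mem_of_mem_erase hj) τ hτ'
        rw [abs_mul]
        calc |m j τ| * |Real.sign (x j τ - x i τ)| ≤ |m j τ| * 1 :=
              mul_le_mul_of_nonneg_left (abs_real_sign_le_one _) (abs_nonneg _)
          _ = m j τ := by rw [mul_one, abs_of_pos hmj]
      have h2 : ∑ j ∈ I.erase i, m j τ ≤ ∑ j ∈ I, m j τ :=
        Finset.sum_le_sum_of_subset_of_nonneg (Finset.erase_subset _ _)
          (fun j hj _ => (hpos j hj τ hτ').le)
      have h3 : ∑ j ∈ I, m j τ = (N:ℝ) := hcons τ hτ'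
      have h4 : |(1:ℝ)/(N:ℝ)| = 1/(N:ℝ) := abs_of_pos (by positivity)
      rw [h4]
      calc (1/(N:ℝ)) * |∑ j ∈ I.erase i, m j τ * Real.sign (x j τ - x i τ)|
          ≤ (1/(N:ℝ)) * (N:ℝ) := by
            apply mul_le_mul_of_nonneg_left _ (by positivity)
            linarith
        _ = 1 := by field_simp
    have hle := intervalIntegral.norm_integral_le_of_norm_le_const hbound
    rw [Real.norm_eq_abs] at hle
    have habs : |s - 0| = s := by rw [sub_zero, abs_of_nonneg hs.1]
    rw [habs, one_mul] at hle
    rw [(hsol i hi).2.2.1 s hs]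
    have h0 := hx0 i hi
    calc |x i 0 + ∫ τ in (0:ℝ)..s,
          (1/(N:ℝ)) * ∑ j ∈ I.erase i, m j τ * Real.sign (x j τ - x i τ)|
        ≤ |x i 0| + |∫ τ in (0:ℝ)..s,
          (1/(N:ℝ)) * ∑ j ∈ I.erase i, m j τ * Real.sign (x j τ - x i τ)| := abs_add_le _ _
      _ ≤ Xbar + T := by
          have := hs.2
          linarith
  -- conclusion
  constructor
  · intro hy
    have hterm : ∀ k ∈ I, m k t * (if 0 ≤ y - x k t then (1:ℝ) else 0) = m k t := by
      intro k hk
      have hb := (abs_le.1 (hxb k hk t ht)).2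
      rw [if_pos (by linarith), mul_one]
    unfold FNemp
    rw [Finset.sum_congr rfl hterm, hcons t ht, one_div_mul_cancel hNne]
    norm_num
  · intro hy
    have hterm : ∀ k ∈ I, m k t * (if 0 ≤ y - x k t then (1:ℝ) else 0) = 0 := by
      intro k hk
      have hb := (abs_le.1 (hxb k hk t ht)).1
      rw [if_neg (by push_neg; linarith), mul_zero]
    unfold FNemp
    rw [Finset.sum_congr rfl hterm]
    simp
end
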